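/- arXiv:1004.4320 — 2 statements merged into one kernel-verified Lean document; each statement's English description precedes it below -/
import Mathlib

section
/- The composition of the four maps described below on n-bit vectors (n ≥ 3, k = ⌈n/2⌉ with 1 ≤ k ≤ n−1) realizes exactly the 3-cycle (2ⁿ−2^{k−1}−1, 2ⁿ−1, 2^{n−1}−1): first a generalized Toffoli flipping bit k−1 when bits k,…,n−1 are all 1; then a generalized Toffoli flipping bit n−1 when bits 0,…,k−1 are all 1; then the first gate again; then the second gate again. All points other than the three listed are fixed by the composite. -/
/-- The generalized Toffoli gate: flips bit `t` of `x` exactly when all bits in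
`controls` are 1. -/
def cmnot (controls : Finset ℕ) (t : ℕ) (x : ℕ) : ℕ :=
  if ∀ c ∈ controls, x.testBit c = true then x ^^^ 2 ^ t else x

private lemma cmnot_pos {S : Finset ℕ} {t x : ℕ} (h : ∀ c ∈ S, x.testBit c = true) :
    cmnot S t x = x ^^^ 2 ^ t := if_pos h

private lemma cmnot_neg {S : Finset ℕ} {t x : ℕ} (h : ¬ ∀ c ∈ S, x.testBit c = true) :
    cmnot S t x = x := if_neg h

private lemma testBit_xor_pow_ne {y t i : ℕ} (h : i ≠ t) :
    (y ^^^ 2 ^ t).testBit i = y.testBit i := by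
  simp [Nat.testBit_xor, Nat.testBit_two_pow, Ne.symm h]

private lemma testBit_xor_pow_self (y t : ℕ) :
    (y ^^^ 2 ^ t).testBit t = !(y.testBit t) := by
  simp [Nat.testBit_xor, Nat.testBit_two_pow]

private lemma testBit_sub_sub {n j : ℕ} (hj : j < n) (i : ℕ) :
    (2 ^ n - 2 ^ j - 1).testBit i = (decide (i < n) && !decide (i = j)) := by
  have h1 : 2 ^ j * 2 ^ (n - j) = 2 ^ n := by rw [← pow_add]; congr 1; omega
  have h2 : (2:ℕ) ^ 1 * 2 ^ (n - j - 1) = 2 ^ (n - j) := by rw [← pow_add]; congr 1; omega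
  have h3 : (2:ℕ) ≤ 2 ^ (n - j) := by
    calc (2:ℕ) = 2 ^ 1 := rfl
    _ ≤ 2 ^ (n - j) := Nat.pow_le_pow_right (by norm_num) (by omega)
  have h4 : (0:ℕ) < 2 ^ j := Nat.pow_pos (by norm_num)
  have h5 : 2 ^ j * (2 ^ (n - j) - 2) + 2 ^ j * 2 = 2 ^ n := by
    rw [← Nat.mul_add, Nat.sub_add_cancel h3, h1]
  have e1 : 2 ^ n - 2 ^ j - 1 = 2 ^ j * (2 ^ (n - j) - 2) + (2 ^ j - 1) := by omega
  have h6 : (2:ℕ) ^ 1 * (2 ^ (n - j - 1) - 1) + 2 ^ 1 * 1 = 2 ^ (n - j) := by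
    have h7 : (1:ℕ) ≤ 2 ^ (n - j - 1) := Nat.one_le_two_pow
    rw [← Nat.mul_add, Nat.sub_add_cancel h7, h2]
  have e2 : 2 ^ (n - j) - 2 = 2 ^ 1 * (2 ^ (n - j - 1) - 1) + 0 := by omega
  rw [e1, Nat.testBit_two_pow_mul_add _ (show 2 ^ j - 1 < 2 ^ j by omega) i]
  rcases lt_or_ge i j with h | h
  · rw [if_pos h, Nat.testBit_two_pow_sub_one]
    have hn : i < n := by omega
    have hij : i ≠ j := by omega
    simp [h, hn, hij]
  · rw [if_neg (by omega), e2,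
      Nat.testBit_two_pow_mul_add _ (show (0:ℕ) < 2 ^ 1 by norm_num) (i - j)]
    rcases Nat.eq_or_lt_of_le h with h' | h'
    · rw [if_pos (by omega)]
      simp [Nat.zero_testBit, h'.symm]
    · rw [if_neg (by omega), Nat.testBit_two_pow_sub_one]
      by_cases hn : i < n
      · have : i - j - 1 < n - j - 1 := by omega
        have hij : i ≠ j := by omega
        simp [this, hn, hij]
      · have : ¬ (i - j - 1 < n - j - 1) := by omega
        simp [this, hn]

/-- The κ₀(3) circuit: with k = ⌈n/2⌉, the composite of the gates
CᵐNOT(n−1,…,k; k−1), CᵏNOT(0,…,k−1; n−1), repeated twice in this order,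
realizes exactly the 3-cycle (2ⁿ−2^{k−1}−1, 2ⁿ−1, 2^{n−1}−1) on [0, 2ⁿ). -/
theorem kappa03_realizes_three_cycle (n : ℕ) (hn : 3 ≤ n) (k : ℕ)
    (hk : k = (n + 1) / 2) :
    ∀ x < 2 ^ n,
      cmnot (Finset.range k) (n - 1)
        (cmnot (Finset.Ico k n) (k - 1)
          (cmnot (Finset.range k) (n - 1)
            (cmnot (Finset.Ico k n) (k - 1) x))) =
      if x = 2 ^ n - 2 ^ (k - 1) - 1 then 2 ^ n - 1
      else if x = 2 ^ n - 1 then 2 ^ (n - 1) - 1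
      else if x = 2 ^ (n - 1) - 1 then 2 ^ n - 2 ^ (k - 1) - 1
      else x := by
  have hk2 : 2 ≤ k := by omega
  have hkn : k < n := by omega
  -- numeric facts about powers
  have f1 : 2 ^ (k - 1) < 2 ^ (n - 1) := Nat.pow_lt_pow_right (by norm_num) (by omega)
  have f2 : 2 ^ (n - 1) < 2 ^ n := Nat.pow_lt_pow_right (by norm_num) (by omega)
  have f3 : 2 ^ (n - 1) + 2 ^ (n - 1) = 2 ^ n := by
    have : 2 ^ (n - 1) * 2 = 2 ^ n := by rw [← pow_succ]; congr 1; omega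
    omega
  have f4 : (0:ℕ) < 2 ^ (k - 1) := Nat.pow_pos (by norm_num)
  -- testBit descriptions of the three special points
  have habit : ∀ i, (2 ^ n - 2 ^ (k - 1) - 1).testBit i
      = (decide (i < n) && !decide (i = k - 1)) := testBit_sub_sub (by omega)
  have hbbit : ∀ i, (2 ^ n - 1).testBit i = decide (i < n) := Nat.testBit_two_pow_sub_one n
  have hcbit : ∀ i, (2 ^ (n - 1) - 1).testBit i = decide (i < n - 1) :=
    Nat.testBit_two_pow_sub_one (n - 1)
  -- xor identities linking the three special points
  have hab : (2 ^ n - 2 ^ (k - 1) - 1) ^^^ 2 ^ (k - 1) = 2 ^ n - 1 := by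
    refine Nat.eq_of_testBit_eq fun i => ?_
    by_cases h : i = k - 1
    · subst h
      rw [testBit_xor_pow_self, habit, hbbit]
      simp [show k - 1 < n by omega]
    · rw [testBit_xor_pow_ne h, habit, hbbit]
      simp [h]
  have hba : (2 ^ n - 1) ^^^ 2 ^ (k - 1) = 2 ^ n - 2 ^ (k - 1) - 1 := by
    rw [← hab, xor_cancel_right]
  have hcb : (2 ^ (n - 1) - 1) ^^^ 2 ^ (n - 1) = 2 ^ n - 1 := by
    refine Nat.eq_of_testBit_eq fun i => ?_
    by_cases h : i = n - 1
    · subst h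
      rw [testBit_xor_pow_self, hcbit, hbbit]
      simp [show n - 1 < n by omega]
    · rw [testBit_xor_pow_ne h, hcbit, hbbit]
      by_cases h' : i < n - 1
      · simp [h', show i < n by omega]
      · simp [h', show ¬ i < n by omega]
  have hbc : (2 ^ n - 1) ^^^ 2 ^ (n - 1) = 2 ^ (n - 1) - 1 := by
    rw [← hcb, xor_cancel_right]
  -- control conditions at the three special points
  have hPa : ∀ c ∈ Finset.Ico k n, (2 ^ n - 2 ^ (k - 1) - 1).testBit c = true := by
    intro c hc
    rw [Finset.mem_Ico] at hc
    rw [habit]; simp [hc.2, show c ≠ k - 1 by omega]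
  have hQa : ¬ ∀ c ∈ Finset.range k, (2 ^ n - 2 ^ (k - 1) - 1).testBit c = true := by
    intro h
    have := h (k - 1) (Finset.mem_range.mpr (by omega))
    rw [habit] at this; simp at this
  have hPb : ∀ c ∈ Finset.Ico k n, (2 ^ n - 1).testBit c = true := by
    intro c hc
    rw [Finset.mem_Ico] at hc
    rw [hbbit]; simp [hc.2]
  have hQb : ∀ c ∈ Finset.range k, (2 ^ n - 1).testBit c = true := by
    intro c hc
    rw [Finset.mem_range] at hc
    rw [hbbit]; simp [show c < n by omega]
  have hPc : ¬ ∀ c ∈ Finset.Ico k n, (2 ^ (n - 1) - 1).testBit c = true := by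
    intro h
    have := h (n - 1) (Finset.mem_Ico.mpr ⟨by omega, by omega⟩)
    rw [hcbit] at this; simp at this
  have hQc : ∀ c ∈ Finset.range k, (2 ^ (n - 1) - 1).testBit c = true := by
    intro c hc
    rw [Finset.mem_range] at hc
    rw [hcbit]; simp [show c < n - 1 by omega]
  -- the three points are pairwise distinct
  have hne_ab : (2 ^ n - 2 ^ (k - 1) - 1 : ℕ) ≠ 2 ^ n - 1 := by omega
  have hne_ac : (2 ^ n - 2 ^ (k - 1) - 1 : ℕ) ≠ 2 ^ (n - 1) - 1 := by omega
  have hne_bc : (2 ^ n - 1 : ℕ) ≠ 2 ^ (n - 1) - 1 := by omega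
  intro x hx
  have hx_hi : ∀ i, n ≤ i → x.testBit i = false := fun i hi =>
    Nat.testBit_eq_false_of_lt (lt_of_lt_of_le hx (Nat.pow_le_pow_right (by norm_num) hi))
  by_cases hP : ∀ c ∈ Finset.Ico k n, x.testBit c = true
  · by_cases hQ : ∀ c ∈ Finset.range k, x.testBit c = true
    · -- x = 2^n - 1
      have hxb : x = 2 ^ n - 1 := by
        refine Nat.eq_of_testBit_eq fun i => ?_
        rw [hbbit]
        rcases lt_or_ge i n with h | h
        · rcases lt_or_ge i k with h' | h'
          · rw [hQ i (Finset.mem_range.mpr h')]; simp [h]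
          · rw [hP i (Finset.mem_Ico.mpr ⟨h', h⟩)]; simp [h]
        · rw [hx_hi i h]; simp; omega
      subst hxb
      rw [cmnot_pos hPb, hba, cmnot_neg hQa, cmnot_pos hPa, hab, cmnot_pos hQb, hbc,
        if_neg (Ne.symm hne_ab), if_pos rfl]
    · -- bits k..n-1 all set, some low bit unset
      by_cases hW : ∃ c₀, c₀ < k ∧ c₀ ≠ k - 1 ∧ x.testBit c₀ = false
      · obtain ⟨c₀, hc₀k, hc₀ne, hc₀bit⟩ := hW
        have hQy : ¬ ∀ c ∈ Finset.range k, (x ^^^ 2 ^ (k - 1)).testBit c = true := by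
          intro h
          have := h c₀ (Finset.mem_range.mpr hc₀k)
          rw [testBit_xor_pow_ne hc₀ne] at this
          rw [hc₀bit] at this; exact absurd this (by simp)
        have hPy : ∀ c ∈ Finset.Ico k n, (x ^^^ 2 ^ (k - 1)).testBit c = true := by
          intro c hc
          rw [Finset.mem_Ico] at hc
          rw [testBit_xor_pow_ne (show c ≠ k - 1 by omega)]
          exact hP c (Finset.mem_Ico.mpr hc)
        rw [cmnot_pos hP, cmnot_neg hQy, cmnot_pos hPy, xor_cancel_right, cmnot_neg hQ]
        have hxa : x ≠ 2 ^ n - 2 ^ (k - 1) - 1 := by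
          intro h; rw [h, habit] at hc₀bit
          simp [show c₀ < n by omega, hc₀ne] at hc₀bit
        have hxb : x ≠ 2 ^ n - 1 := by
          intro h; rw [h, hbbit] at hc₀bit
          simp [show c₀ < n by omega] at hc₀bit
        have hxc : x ≠ 2 ^ (n - 1) - 1 := by
          intro h; rw [h, hcbit] at hc₀bit
          simp [show c₀ < n - 1 by omega] at hc₀bit
        rw [if_neg hxa, if_neg hxb, if_neg hxc]
      · -- x = 2^n - 2^(k-1) - 1
        push_neg at hW
        have hbitk1 : x.testBit (k - 1) = false := by
          by_contra h
          apply hQ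
          intro c hc
          rw [Finset.mem_range] at hc
          by_cases h' : c = k - 1
          · subst h'; simpa using h
          · exact Bool.ne_false_iff.mp (hW c hc h')
        have hxa : x = 2 ^ n - 2 ^ (k - 1) - 1 := by
          refine Nat.eq_of_testBit_eq fun i => ?_
          rw [habit]
          by_cases h1 : i = k - 1
          · subst h1; rw [hbitk1]; simp
          · rcases lt_or_ge i n with h2 | h2
            · rcases lt_or_ge i k with h3 | h3
              · rw [Bool.ne_false_iff.mp (hW i h3 h1)]; simp [h2, h1]
              · rw [hP i (Finset.mem_Ico.mpr ⟨h3, h2⟩)]; simp [h2, h1]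
            · rw [hx_hi i h2]; simp; omega
        subst hxa
        rw [cmnot_pos hPa, hab, cmnot_pos hQb, hbc, cmnot_neg hPc, cmnot_pos hQc, hcb,
          if_pos rfl]
  · by_cases hQ : ∀ c ∈ Finset.range k, x.testBit c = true
    · -- low bits all set, some bit in [k,n) unset
      by_cases hW : ∃ c₀, k ≤ c₀ ∧ c₀ < n ∧ c₀ ≠ n - 1 ∧ x.testBit c₀ = false
      · obtain ⟨c₀, hc₀k, hc₀n, hc₀ne, hc₀bit⟩ := hW
        have hPz : ¬ ∀ c ∈ Finset.Ico k n, (x ^^^ 2 ^ (n - 1)).testBit c = true := by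
          intro h
          have := h c₀ (Finset.mem_Ico.mpr ⟨hc₀k, hc₀n⟩)
          rw [testBit_xor_pow_ne hc₀ne] at this
          rw [hc₀bit] at this; exact absurd this (by simp)
        have hQz : ∀ c ∈ Finset.range k, (x ^^^ 2 ^ (n - 1)).testBit c = true := by
          intro c hc
          rw [Finset.mem_range] at hc
          rw [testBit_xor_pow_ne (show c ≠ n - 1 by omega)]
          exact hQ c (Finset.mem_range.mpr hc)
        rw [cmnot_neg hP, cmnot_pos hQ, cmnot_neg hPz, cmnot_pos hQz, xor_cancel_right]
        have hxa : x ≠ 2 ^ n - 2 ^ (k - 1) - 1 := by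
          intro h; rw [h, habit] at hc₀bit
          simp [hc₀n, show c₀ ≠ k - 1 by omega] at hc₀bit
        have hxb : x ≠ 2 ^ n - 1 := by
          intro h; rw [h, hbbit] at hc₀bit
          simp [hc₀n] at hc₀bit
        have hxc : x ≠ 2 ^ (n - 1) - 1 := by
          intro h; rw [h, hcbit] at hc₀bit
          simp [show c₀ < n - 1 by omega] at hc₀bit
        rw [if_neg hxa, if_neg hxb, if_neg hxc]
      · -- x = 2^(n-1) - 1
        push_neg at hW
        have hbitn1 : x.testBit (n - 1) = false := by
          by_contra h
          apply hP
          intro c hc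
          rw [Finset.mem_Ico] at hc
          by_cases h' : c = n - 1
          · subst h'; simpa using h
          · exact Bool.ne_false_iff.mp (hW c hc.1 hc.2 h')
        have hxc : x = 2 ^ (n - 1) - 1 := by
          refine Nat.eq_of_testBit_eq fun i => ?_
          rw [hcbit]
          by_cases h1 : i = n - 1
          · subst h1; rw [hbitn1]; simp
          · rcases lt_or_ge i n with h2 | h2
            · rcases lt_or_ge i k with h3 | h3
              · rw [hQ i (Finset.mem_range.mpr h3)]; simp; omega
              · rw [Bool.ne_false_iff.mp (hW i h3 h2 h1)]; simp; omega
            · rw [hx_hi i h2]; simp; omega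
        subst hxc
        rw [cmnot_neg hPc, cmnot_pos hQc, hcb, cmnot_pos hPb, hba, cmnot_neg hQa,
          if_neg (Ne.symm hne_ac), if_neg (Ne.symm hne_bc), if_pos rfl]
    · -- both conditions fail: x is fixed
      rw [cmnot_neg hP, cmnot_neg hQ, cmnot_neg hP, cmnot_neg hQ]
      have hxa : x ≠ 2 ^ n - 2 ^ (k - 1) - 1 := fun h => hP (h ▸ hPa)
      have hxb : x ≠ 2 ^ n - 1 := fun h => hP (h ▸ hPb)
      have hxc : x ≠ 2 ^ (n - 1) - 1 := fun h => hQ (h ▸ hQc)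
      rw [if_neg hxa, if_neg hxb, if_neg hxc]
end

section
/- For n ≥ 4, the composition of C^{n-3}NOT(n−1,…,3; 2) — flipping bit 2 when bits 3..n−1 are all 1 — followed by C^{n-2}NOT(n−1,…,2; 1) — flipping bit 1 when bits 2..n−1 are all 1 — realizes the product of the two disjoint 4-cycles (2ⁿ−8, 2ⁿ−2, 2ⁿ−6, 2ⁿ−4)(2ⁿ−7, 2ⁿ−1, 2ⁿ−5, 2ⁿ−3), fixing all other points of [0, 2ⁿ). -/
private lemma all_bits_iff (k n x : ℕ) (hk : k ≤ n) (hx : x < 2 ^ n) :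
    (∀ c ∈ Finset.Ico k n, x.testBit c = true) ↔ 2 ^ n - 2 ^ k ≤ x := by
  set m := n - k with hm
  have hn : n = k + m := by omega
  have hpow : 2 ^ n = 2 ^ k * 2 ^ m := by rw [hn, pow_add]
  have hy : x / 2 ^ k < 2 ^ m := by
    rw [Nat.div_lt_iff_lt_mul (Nat.two_pow_pos k)]
    exact lt_of_lt_of_le hx (le_of_eq (by rw [hpow, mul_comm]))
  have htb : ∀ i, (x / 2 ^ k).testBit i = x.testBit (k + i) := by
    intro i
    rw [← Nat.shiftRight_eq_div_pow, Nat.testBit_shiftRight]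
  constructor
  · intro h
    have heq : x / 2 ^ k = 2 ^ m - 1 := by
      apply Nat.eq_of_testBit_eq
      intro j
      rw [Nat.testBit_two_pow_sub_one]
      by_cases hj : j < m
      · rw [htb]; simp [hj, h (k + j) (Finset.mem_Ico.mpr ⟨by omega, by omega⟩)]
      · simp only [hj, decide_false]
        exact Nat.testBit_lt_two_pow
          (lt_of_lt_of_le hy (Nat.pow_le_pow_right (by norm_num) (show m ≤ j by omega)))
    have := Nat.le_div_iff_mul_le (k := 2 ^ k) (x := 2 ^ m - 1) (y := x)
      (Nat.two_pow_pos k) |>.mp (by omega)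
    have h1 : (2 ^ m - 1) * 2 ^ k = 2 ^ k * 2 ^ m - 2 ^ k := by
      rw [Nat.sub_mul, one_mul, mul_comm]
    have h2 : (1:ℕ) ≤ 2 ^ k := Nat.one_le_two_pow
    omega
  · intro h c hc
    obtain ⟨hc1, hc2⟩ := Finset.mem_Ico.mp hc
    have heq : x / 2 ^ k = 2 ^ m - 1 := by
      have h2 : (1:ℕ) ≤ 2 ^ k := Nat.one_le_two_pow
      have hle : 2 ^ m - 1 ≤ x / 2 ^ k := by
        rw [Nat.le_div_iff_mul_le (Nat.two_pow_pos k)]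
        have h1 : (2 ^ m - 1) * 2 ^ k = 2 ^ k * 2 ^ m - 2 ^ k := by
          rw [Nat.sub_mul, one_mul, mul_comm]
        omega
      omega
    have : x.testBit c = (x / 2 ^ k).testBit (c - k) := by
      rw [htb]; congr 1; omega
    rw [this, heq, Nat.testBit_two_pow_sub_one]
    simp only [decide_eq_true_eq]
    omega

private lemma xor_low (a r s : ℕ) (hr : r < 8) (hs : s < 8) :
    (8 * a + r) ^^^ s = 8 * a + (r ^^^ s) := by
  have h8 : (8:ℕ) = 2 ^ 3 := rfl
  have hrs : r ^^^ s < 8 := by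
    rw [h8] at *; exact Nat.xor_lt_two_pow hr hs
  apply Nat.eq_of_testBit_eq
  intro j
  rw [Nat.testBit_xor, h8, Nat.testBit_two_pow_mul_add a hr j,
    Nat.testBit_two_pow_mul_add a hrs j]
  by_cases hj : j < 3
  · simp [hj, Nat.testBit_xor]
  · simp only [hj, if_false]
    have : s.testBit j = false :=
      Nat.testBit_lt_two_pow (lt_of_lt_of_le hs (by
        calc (8:ℕ) = 2 ^ 3 := rfl
        _ ≤ 2 ^ j := Nat.pow_le_pow_right (by norm_num) (by omega)))
    simp [this]

set_option maxHeartbeats 1600000 in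
/-- The κ₀(4,4) circuit: C^{n−3}NOT(n−1,…,3; 2) followed by
C^{n−2}NOT(n−1,…,2; 1) realizes the product of the two disjoint 4-cycles
(2ⁿ−8, 2ⁿ−2, 2ⁿ−6, 2ⁿ−4)(2ⁿ−7, 2ⁿ−1, 2ⁿ−5, 2ⁿ−3), fixing all other points. -/
theorem kappa044_realizes_cycles (n : ℕ) (hn : 4 ≤ n) :
    ∀ x < 2 ^ n,
      cmnot (Finset.Ico 2 n) 1 (cmnot (Finset.Ico 3 n) 2 x) =
      if x = 2 ^ n - 8 then 2 ^ n - 2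
      else if x = 2 ^ n - 2 then 2 ^ n - 6
      else if x = 2 ^ n - 6 then 2 ^ n - 4
      else if x = 2 ^ n - 4 then 2 ^ n - 8
      else if x = 2 ^ n - 7 then 2 ^ n - 1
      else if x = 2 ^ n - 1 then 2 ^ n - 5
      else if x = 2 ^ n - 5 then 2 ^ n - 3
      else if x = 2 ^ n - 3 then 2 ^ n - 7
      else x := by
  intro x hx
  have h16 : 16 ≤ 2 ^ n := by
    calc (16:ℕ) = 2 ^ 4 := rfl
    _ ≤ 2 ^ n := Nat.pow_le_pow_right (by norm_num) hn
  have hA : 2 ^ n = 8 * 2 ^ (n - 3) := by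
    rw [show (8:ℕ) = 2 ^ 3 from rfl, ← pow_add]
    congr 1; omega
  have hcond1 : (∀ c ∈ Finset.Ico 3 n, x.testBit c = true) ↔ 2 ^ n - 8 ≤ x := by
    have := all_bits_iff 3 n x (by omega) hx
    rwa [show (2:ℕ) ^ 3 = 8 from rfl] at this
  by_cases hbig : 2 ^ n - 8 ≤ x
  · obtain ⟨r, hr8, hxr⟩ : ∃ r, r < 8 ∧ x = 8 * (2 ^ (n - 3) - 1) + r :=
      ⟨x - (2 ^ n - 8), by omega, by omega⟩
    subst hxr
    have hr4 : r ^^^ 4 < 8 := by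
      rw [show (8:ℕ) = 2 ^ 3 from rfl] at *
      exact Nat.xor_lt_two_pow hr8 (by norm_num)
    have hinner : cmnot (Finset.Ico 3 n) 2 (8 * (2 ^ (n - 3) - 1) + r) =
        8 * (2 ^ (n - 3) - 1) + (r ^^^ 4) := by
      rw [cmnot, if_pos (hcond1.mpr hbig), show (2:ℕ) ^ 2 = 4 from rfl,
        xor_low _ _ _ hr8 (by norm_num)]
    rw [hinner, cmnot, show (2:ℕ) ^ 1 = 2 from rfl]
    have hcond2 : (∀ c ∈ Finset.Ico 2 n,
        (8 * (2 ^ (n - 3) - 1) + (r ^^^ 4)).testBit c = true) ↔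
        2 ^ n - 4 ≤ 8 * (2 ^ (n - 3) - 1) + (r ^^^ 4) := by
      have := all_bits_iff 2 n (8 * (2 ^ (n - 3) - 1) + (r ^^^ 4)) (by omega) (by omega)
      rwa [show (2:ℕ) ^ 2 = 4 from rfl] at this
    rw [if_congr hcond2 rfl rfl]
    split_ifs <;> interval_cases r <;>
      simp only [Nat.reduceXor] at * <;>
      first
        | omega
        | (rw [xor_low _ _ _ (by norm_num) (by norm_num)]
           simp only [Nat.reduceXor]
           omega)
  · have hinner : cmnot (Finset.Ico 3 n) 2 x = x := by
      rw [cmnot, if_neg (fun h => hbig (hcond1.mp h))]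
    rw [hinner, cmnot]
    have hcond2 : (∀ c ∈ Finset.Ico 2 n, x.testBit c = true) ↔ 2 ^ n - 4 ≤ x := by
      have := all_bits_iff 2 n x (by omega) hx
      rwa [show (2:ℕ) ^ 2 = 4 from rfl] at this
    rw [if_neg (fun h => hbig (by have := hcond2.mp h; omega))]
    split_ifs <;> omega
end
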